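/- The generalised Grothendieck polynomial with variables specialized to the inhomogeneities equals one: G_λ(z₁,…,z_m; z₁,…,z_m) = 1 for every partition λ with at most m columns, where G_λ(x₁,…,x_m; z₁,…,z_m) is the partition function of the column model for G^{(0,-1)} with vertex weight at row i, column j given by w_{x_i/z_j}(a,b;c,d). -/

import Mathlib

/-- Vertex weights of the bosonic column model for `G^{(0,-1)}` with spectral parameter
`u`: `u^a` if `b = c`, `u^a·(1-u)` if `b > c`, `0` if `b < c`, with conservation. -/
def grothColWeight {F : Type*} [Field F] (u : F) (a b c d : ℕ) : F :=
  if a + b = c + d then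
    (if b < c then 0
     else if b = c then u ^ a
     else u ^ a * (1 - u))
  else 0

/-- Partition function of an `m × n` lattice (rows indexed by `i : Fin m` from the
bottom, sites by `j : Fin n`), with site-dependent weights `w i j`, free left
boundaries, right horizontal boundary labels `0`, bottom vertical labels `bot` and top
vertical labels `top`; all summed edge labels are bounded by `B`. -/
def latticeZ {F : Type*} [Field F] (m n B : ℕ)
    (w : Fin m → Fin n → ℕ → ℕ → ℕ → ℕ → F) (bot top : ℕ → ℕ) : F :=
  ∑ v : Fin (m + 1) → Fin n → Fin (B + 1), ∑ e : Fin m → Fin (n + 1) → Fin (B + 1),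
    if (∀ j : Fin n, (v 0 j : ℕ) = bot j) ∧ (∀ j : Fin n, (v (Fin.last m) j : ℕ) = top j)
        ∧ (∀ i : Fin m, (e i (Fin.last n) : ℕ) = 0) then
      ∏ i : Fin m, ∏ j : Fin n,
        w i j (e i j.castSucc) (v i.castSucc j) (e i j.succ) (v i.succ j)
    else 0

/-- Height of the `(c+1)`-st column of the partition `lam` (rows indexed below `M`). -/
def colHt (lam : ℕ → ℕ) (M c : ℕ) : ℕ :=
  ((Finset.range M).filter (fun r => c < lam r)).card

/-- `mcol lam M j` = number of columns of the partition `lam` of size `j + 1`. -/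
def mcol (lam : ℕ → ℕ) (M j : ℕ) : ℕ :=
  ((Finset.range (lam 0)).filter (fun c => colHt lam M c = j + 1)).card

namespace GrothAux

variable {F : Type*} [Field F]

/-- extend a bounded `Fin n`-vector to an `ℕ`-indexed one by `0`. -/
def fext {n B : ℕ} (ν : Fin n → Fin (B+1)) : ℕ → ℕ :=
  fun j => if h : j < n then (ν ⟨j, h⟩ : ℕ) else 0

lemma fext_coe {n B : ℕ} (ν : Fin n → Fin (B+1)) (j : Fin n) :
    fext ν (j : ℕ) = (ν j : ℕ) := by
  simp [fext, j.isLt]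

lemma fext_cons_zero {n B : ℕ} (x : Fin (B+1)) (ν : Fin n → Fin (B+1)) :
    fext (Fin.cons x ν) 0 = (x : ℕ) := by
  simp [fext]

lemma fext_cons_succ {n B : ℕ} (x : Fin (B+1)) (ν : Fin n → Fin (B+1)) (j : ℕ) (hj : j < n) :
    fext (Fin.cons x ν) (j + 1) = fext ν j := by
  simp only [fext, dif_pos (Nat.succ_lt_succ hj), dif_pos hj]
  have : (⟨j + 1, Nat.succ_lt_succ hj⟩ : Fin (n+1)) = (⟨j, hj⟩ : Fin n).succ := rfl
  rw [this, Fin.cons_succ]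

/-- column-by-column (left-peeling) partition function of a single row:
`k` columns, left edge `a`, right edge `0`, bottom `μ`, top `ν`. -/
def colsF (B : ℕ) : (ℕ → ℕ → ℕ → ℕ → ℕ → F) → (ℕ → ℕ) → (ℕ → ℕ) → ℕ → ℕ → F
  | _, _, _, 0, a => if a = 0 then 1 else 0
  | w, μ, ν, (k+1), a => ∑ c : Fin (B+1),
      w 0 a (μ 0) (c : ℕ) (ν 0) *
        colsF B (fun j => w (j+1)) (fun j => μ (j+1)) (fun j => ν (j+1)) k (c : ℕ)

/-- row-by-row (bottom-peeling) partition function: `r` rows of `n` sites,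
weights `W i j`, bottom `bot`, top `top`, free left edges, right edges `0`. -/
def rowsF (B n : ℕ) (top : ℕ → ℕ) :
    (ℕ → ℕ → ℕ → ℕ → ℕ → ℕ → F) → ℕ → (ℕ → ℕ) → F
  | _, 0, bot => if ∀ j < n, bot j = top j then 1 else 0
  | W, (r+1), bot => ∑ ν : Fin n → Fin (B+1),
      (∑ a : Fin (B+1), colsF B (W 0) bot (fext ν) n (a : ℕ)) *
        rowsF B n top (fun i => W (i+1)) r (fext ν)

lemma colsF_congr (B : ℕ) :
    ∀ (k : ℕ) (w w' : ℕ → ℕ → ℕ → ℕ → ℕ → F) (μ μ' ν ν' : ℕ → ℕ) (a : ℕ),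
    (∀ j < k, w j = w' j) → (∀ j < k, μ j = μ' j) → (∀ j < k, ν j = ν' j) →
    colsF B w μ ν k a = colsF B w' μ' ν' k a := by
  intro k
  induction k with
  | zero => intro _ _ _ _ _ _ _ _ _ _; rfl
  | succ k ih =>
    intro w w' μ μ' ν ν' a hw hμ hν
    simp only [colsF]
    refine Finset.sum_congr rfl fun c _ => ?_
    rw [hw 0 (Nat.succ_pos k), hμ 0 (Nat.succ_pos k), hν 0 (Nat.succ_pos k),
      ih _ _ _ _ _ _ _ (fun j hj => hw (j+1) (Nat.succ_lt_succ hj))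
        (fun j hj => hμ (j+1) (Nat.succ_lt_succ hj))
        (fun j hj => hν (j+1) (Nat.succ_lt_succ hj))]

lemma rowsF_congr (B n : ℕ) (top : ℕ → ℕ) :
    ∀ (r : ℕ) (W W' : ℕ → ℕ → ℕ → ℕ → ℕ → ℕ → F) (bot bot' : ℕ → ℕ),
    (∀ i < r, ∀ j < n, W i j = W' i j) → (∀ j < n, bot j = bot' j) →
    rowsF B n top W r bot = rowsF B n top W' r bot' := by
  intro r
  induction r with
  | zero =>
    intro W W' bot bot' _ hbot
    simp only [rowsF]
    have : (∀ j < n, bot j = top j) ↔ (∀ j < n, bot' j = top j) := by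
      constructor <;> intro h j hj
      · rw [← hbot j hj]; exact h j hj
      · rw [hbot j hj]; exact h j hj
    simp only [this]
  | succ r ih =>
    intro W W' bot bot' hW hbot
    simp only [rowsF]
    refine Finset.sum_congr rfl fun ν _ => ?_
    congr 1
    · refine Finset.sum_congr rfl fun a _ => ?_
      exact colsF_congr B n _ _ _ _ _ _ _ (fun j hj => hW 0 (Nat.succ_pos r) j hj) (fun j hj => hbot j hj) (fun _ _ => rfl)
    · exact ih _ _ _ _ (fun i hi j hj => hW (i+1) (Nat.succ_lt_succ hi) j hj) (fun _ _ => rfl)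

end GrothAux
-- appended to part1
namespace GrothAux
variable {F : Type*} [Field F]

lemma groth_ne_zero {u : F} {a b c d : ℕ} (h : grothColWeight u a b c d ≠ 0) :
    a + b = c + d ∧ c ≤ b := by
  by_cases h1 : a + b = c + d
  · refine ⟨h1, ?_⟩
    by_contra hc
    exact h (by simp [grothColWeight, h1, Nat.lt_of_not_le hc])
  · exact absurd (by simp [grothColWeight, h1]) h

lemma groth_one_ne_zero {a b c d : ℕ} (h : grothColWeight (1 : F) a b c d ≠ 0) : b = c := by
  by_contra hbc
  rcases Nat.lt_or_ge b c with h1 | h1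
  · exact h (by simp [grothColWeight, h1])
  · have h2 : c < b := lt_of_le_of_ne h1 (Ne.symm hbc)
    by_cases h3 : a + b = c + d
    · exact h (by simp [grothColWeight, h3, Nat.not_lt.mpr h1, hbc])
    · exact h (by simp [grothColWeight, h3])

lemma groth_zero_zero (u : F) : grothColWeight u 0 0 0 0 = 1 := by
  simp [grothColWeight]

lemma groth_pass (u : F) (a b : ℕ) : grothColWeight u a b b (a) = u ^ a := by
  simp [grothColWeight, Nat.add_comm]

/-- the single-column telescoping identity. -/
lemma single_col (B : ℕ) (u : F) (c d : ℕ) (h : c + d ≤ B) :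
    ∑ a : Fin (B+1), ∑ b : Fin (B+1), grothColWeight u (a : ℕ) (b : ℕ) c d = 1 := by
  have hswap : ∑ a : Fin (B+1), ∑ b : Fin (B+1), grothColWeight u (a : ℕ) (b : ℕ) c d
      = ∑ b ∈ Finset.range (B+1), ∑ a ∈ Finset.range (B+1), grothColWeight u a b c d := by
    rw [Finset.sum_comm]
    rw [← Fin.sum_univ_eq_sum_range (fun b => ∑ a ∈ Finset.range (B+1), grothColWeight u a b c d)]
    refine Finset.sum_congr rfl fun b _ => ?_
    exact Fin.sum_univ_eq_sum_range (fun a => grothColWeight u a (b:ℕ) c d) (B+1)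
  rw [hswap]
  have hg : ∀ b, (∑ a ∈ Finset.range (B+1), grothColWeight u a b c d)
      = if c ≤ b ∧ b ≤ c + d then u ^ (c + d - b) * (if b = c then 1 else (1 - u)) else 0 := by
    intro b
    by_cases h1 : c ≤ b ∧ b ≤ c + d
    · rw [if_pos h1]
      rw [Finset.sum_eq_single (c + d - b)]
      · have hab : (c + d - b) + b = c + d := Nat.sub_add_cancel h1.2
        by_cases hbc : b = c
        · simp only [if_pos hbc, mul_one, grothColWeight, if_pos hab]
          subst hbc
          simp
        · have : c < b := lt_of_le_of_ne h1.1 (Ne.symm hbc)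
          simp only [grothColWeight, if_pos hab, if_neg (Nat.not_lt.mpr h1.1), if_neg hbc,
            if_neg hbc]
      · intro a _ ha
        have : a + b ≠ c + d := by omega
        simp [grothColWeight, this]
      · intro hmem
        exact absurd (Finset.mem_range.mpr (by omega)) hmem
    · rw [if_neg h1]
      refine Finset.sum_eq_zero fun a _ => ?_
      rcases Nat.lt_or_ge b c with h2 | h2
      · by_cases h3 : a + b = c + d <;> simp [grothColWeight, h2, h3]
      · have h3 : c + d < b := by omega
        have : a + b ≠ c + d := by omega
        simp [grothColWeight, this]
  simp only [hg]
  have hsub : ∑ b ∈ Finset.range (B+1),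
        (if c ≤ b ∧ b ≤ c + d then u ^ (c + d - b) * (if b = c then 1 else (1 - u)) else 0)
      = ∑ b ∈ Finset.Ico c (c + d + 1),
        (if c ≤ b ∧ b ≤ c + d then u ^ (c + d - b) * (if b = c then 1 else (1 - u)) else 0) := by
    refine (Finset.sum_subset ?_ ?_).symm
    · intro x hx
      rw [Finset.mem_Ico] at hx
      exact Finset.mem_range.mpr (by omega)
    · intro x _ hx
      rw [Finset.mem_Ico] at hx
      rw [if_neg (by omega)]
  rw [hsub, Finset.sum_Ico_eq_sum_range]
  have hd1 : c + d + 1 - c = d + 1 := by omega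
  rw [hd1]
  have hterm : ∀ k ∈ Finset.range (d+1),
      (if c ≤ c + k ∧ c + k ≤ c + d then u ^ (c + d - (c + k)) * (if c + k = c then 1 else (1 - u)) else 0)
      = u ^ (d - k) * (if k = 0 then 1 else (1 - u)) := by
    intro k hk
    rw [Finset.mem_range] at hk
    rw [if_pos ⟨Nat.le_add_right _ _, by omega⟩]
    congr 1
    · congr 1; omega
    · by_cases hk0 : k = 0 <;> simp [hk0]
  rw [Finset.sum_congr rfl hterm, Finset.sum_range_succ']
  have h0 : u ^ (d - 0) * (if (0:ℕ) = 0 then (1:F) else (1 - u)) = u ^ d := by simp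
  rw [h0]
  have hrest : ∑ k ∈ Finset.range d, u ^ (d - (k+1)) * (if k + 1 = 0 then (1:F) else (1 - u))
      = (∑ k ∈ Finset.range d, u ^ (d - 1 - k)) * (1 - u) := by
    rw [Finset.sum_mul]
    refine Finset.sum_congr rfl fun k hk => ?_
    rw [if_neg (Nat.succ_ne_zero k)]
    congr 2
    omega
  rw [hrest, Finset.sum_range_reflect (fun k => u ^ k) d]
  have hgeo : (∑ k ∈ Finset.range d, u ^ k) * (1 - u) = 1 - u ^ d := by
    have := geom_sum_mul u d
    linear_combination -this
  rw [hgeo]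
  ring
end GrothAux
namespace GrothAux
variable {F : Type*} [Field F]

lemma sum_pi_succ {α : Type*} {M : Type*} [Fintype α] [DecidableEq α] [AddCommMonoid M]
    (k : ℕ) (f : (Fin (k+1) → α) → M) :
    ∑ μ : Fin (k+1) → α, f μ = ∑ x : α, ∑ μ' : Fin k → α, f (Fin.cons x μ') := by
  rw [← (Fin.consEquiv (fun _ : Fin (k+1) => α)).sum_comp f, Fintype.sum_prod_type]
  rfl

/-- conservation of particles along a row. -/
lemma suppA (B : ℕ) :
    ∀ (k : ℕ) (w : ℕ → ℕ → ℕ → ℕ → ℕ → F) (μ ν : ℕ → ℕ) (a : ℕ),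
    (∀ j a b c d, w j a b c d ≠ 0 → a + b = c + d) →
    colsF B w μ ν k a ≠ 0 →
    a + ∑ j ∈ Finset.range k, μ j = ∑ j ∈ Finset.range k, ν j := by
  intro k
  induction k with
  | zero =>
    intro w μ ν a _ h
    simp only [colsF] at h
    by_cases ha : a = 0
    · simp [ha]
    · exact absurd (if_neg ha) h
  | succ k ih =>
    intro w μ ν a hw h
    simp only [colsF] at h
    obtain ⟨c, _, hc⟩ := Finset.exists_ne_zero_of_sum_ne_zero h
    have h1 : w 0 a (μ 0) (c:ℕ) (ν 0) ≠ 0 := fun h0 => hc (by rw [h0, zero_mul])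
    have h2 : colsF B (fun j => w (j+1)) (fun j => μ (j+1)) (fun j => ν (j+1)) k (c:ℕ) ≠ 0 :=
      fun h0 => hc (by rw [h0, mul_zero])
    have e1 := hw 0 a (μ 0) (c:ℕ) (ν 0) h1
    have e2 := ih _ _ _ _ (fun j a b c d hne => hw (j+1) a b c d hne) h2
    rw [Finset.sum_range_succ' μ, Finset.sum_range_succ' ν]
    omega

/-- freezing: if the top labels vanish strictly right of the special column `i`
(where the weight forces `b = c`), then the bottom labels vanish from `i` on. -/
lemma suppB (B : ℕ) :
    ∀ (k : ℕ) (i : ℕ) (w : ℕ → ℕ → ℕ → ℕ → ℕ → F) (μ ν : ℕ → ℕ) (a : ℕ),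
    (∀ j a b c d, w j a b c d ≠ 0 → a + b = c + d ∧ c ≤ b) →
    (∀ a b c d, w i a b c d ≠ 0 → b = c) →
    (∀ j, i < j → ν j = 0) →
    colsF B w μ ν k a ≠ 0 →
    ∀ j, i ≤ j → j < k → μ j = 0 := by
  intro k
  induction k with
  | zero => intro _ _ _ _ _ _ _ _ _ _ _ h; omega
  | succ k ih =>
    intro i w μ ν a hw1 hw2 hν h
    simp only [colsF] at h
    obtain ⟨c, _, hc⟩ := Finset.exists_ne_zero_of_sum_ne_zero h
    have h1 : w 0 a (μ 0) (c:ℕ) (ν 0) ≠ 0 := fun h0 => hc (by rw [h0, zero_mul])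
    have h2 : colsF B (fun j => w (j+1)) (fun j => μ (j+1)) (fun j => ν (j+1)) k (c:ℕ) ≠ 0 :=
      fun h0 => hc (by rw [h0, mul_zero])
    rcases Nat.eq_zero_or_pos i with hi0 | hipos
    · subst hi0
      have hν' : ∀ j, ν (j+1) = 0 := fun j => hν (j+1) (Nat.succ_pos j)
      have hcons := suppA B k _ _ _ _ (fun j a b c d hne => (hw1 (j+1) a b c d hne).1) h2
      have hz : ∑ j ∈ Finset.range k, ν (j+1) = 0 :=
        Finset.sum_eq_zero fun j _ => hν' j
      rw [hz] at hcons
      have hc0 : (c : ℕ) = 0 := by omega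
      have hμtail : ∀ j < k, μ (j+1) = 0 := by
        intro j hj
        have := (Finset.sum_eq_zero_iff.mp (by omega :
          ∑ j ∈ Finset.range k, μ (j+1) = 0)) j (Finset.mem_range.mpr hj)
        exact this
      have hμ0 : μ 0 = 0 := by
        have := hw2 a (μ 0) (c:ℕ) (ν 0) h1
        omega
      intro j _ hj
      cases j with
      | zero => exact hμ0
      | succ j => exact hμtail j (by omega)
    · obtain ⟨i', rfl⟩ : ∃ i', i = i' + 1 := ⟨i - 1, by omega⟩
      intro j hj hjk
      obtain ⟨j', rfl⟩ : ∃ j'', j = j'' + 1 := ⟨j - 1, by omega⟩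
      exact ih i' (fun j => w (j+1)) _ _ _
        (fun j a b c d hne => hw1 (j+1) a b c d hne)
        (fun a b c d hne => hw2 a b c d hne)
        (fun j hij => hν (j+1) (by omega)) h2 j' (by omega) (by omega)
end GrothAux
namespace GrothAux
variable {F : Type*} [Field F]

lemma fin_eq_zero_of_val {B : ℕ} {x : Fin (B+1)} (h : (x : ℕ) = 0) : x = 0 := by
  ext
  simp [h]

/-- peel the leftmost column from a `μ`-summed row block. -/
lemma reorg (B k : ℕ) (w : ℕ → ℕ → ℕ → ℕ → ℕ → F) (ν : ℕ → ℕ) (a : ℕ) :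
    ∑ μ : Fin (k+1) → Fin (B+1), colsF B w (fext μ) ν (k+1) a
    = ∑ c : Fin (B+1), (∑ x : Fin (B+1), w 0 a (x:ℕ) (c:ℕ) (ν 0)) *
        (∑ μ' : Fin k → Fin (B+1),
          colsF B (fun j => w (j+1)) (fext μ') (fun j => ν (j+1)) k (c:ℕ)) := by
  rw [sum_pi_succ]
  have hin : ∀ (x : Fin (B+1)) (μ' : Fin k → Fin (B+1)),
      colsF B w (fext (Fin.cons x μ')) ν (k+1) a
      = ∑ c : Fin (B+1), w 0 a (x:ℕ) (c:ℕ) (ν 0) *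
          colsF B (fun j => w (j+1)) (fext μ') (fun j => ν (j+1)) k (c:ℕ) := by
    intro x μ'
    simp only [colsF, fext_cons_zero]
    refine Finset.sum_congr rfl fun c _ => ?_
    congr 1
    refine colsF_congr B k _ _ _ _ _ _ _ (fun _ _ => rfl) ?_ (fun _ _ => rfl)
    intro j hj
    exact fext_cons_succ x μ' j hj
  calc ∑ x : Fin (B+1), ∑ μ' : Fin k → Fin (B+1), colsF B w (fext (Fin.cons x μ')) ν (k+1) a
      = ∑ x : Fin (B+1), ∑ μ' : Fin k → Fin (B+1), ∑ c : Fin (B+1),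
          w 0 a (x:ℕ) (c:ℕ) (ν 0) *
            colsF B (fun j => w (j+1)) (fext μ') (fun j => ν (j+1)) k (c:ℕ) := by
        refine Finset.sum_congr rfl fun x _ => Finset.sum_congr rfl fun μ' _ => hin x μ'
    _ = ∑ c : Fin (B+1), ∑ x : Fin (B+1), ∑ μ' : Fin k → Fin (B+1),
          w 0 a (x:ℕ) (c:ℕ) (ν 0) *
            colsF B (fun j => w (j+1)) (fext μ') (fun j => ν (j+1)) k (c:ℕ) := by
        rw [show (∑ x : Fin (B+1), ∑ μ' : Fin k → Fin (B+1), ∑ c : Fin (B+1),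
          w 0 a (x:ℕ) (c:ℕ) (ν 0) *
            colsF B (fun j => w (j+1)) (fext μ') (fun j => ν (j+1)) k (c:ℕ))
          = ∑ x : Fin (B+1), ∑ c : Fin (B+1), ∑ μ' : Fin k → Fin (B+1),
          w 0 a (x:ℕ) (c:ℕ) (ν 0) *
            colsF B (fun j => w (j+1)) (fext μ') (fun j => ν (j+1)) k (c:ℕ)
          from Finset.sum_congr rfl fun x _ => Finset.sum_comm]
        exact Finset.sum_comm
    _ = _ := by
        refine Finset.sum_congr rfl fun c _ => ?_
        rw [Finset.sum_mul]
        refine Finset.sum_congr rfl fun x _ => ?_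
        rw [Finset.mul_sum]

/-- a row block whose top labels all vanish is frozen. -/
lemma zt (B : ℕ) :
    ∀ (k : ℕ) (w : ℕ → ℕ → ℕ → ℕ → ℕ → F) (ν : ℕ → ℕ) (c : ℕ),
    (∀ j a b c d, w j a b c d ≠ 0 → a + b = c + d ∧ c ≤ b) →
    (∀ j, w j 0 0 0 0 = 1) →
    (∀ j < k, ν j = 0) →
    ∑ μ : Fin k → Fin (B+1), colsF B w (fext μ) ν k c = if c = 0 then 1 else 0 := by
  intro k
  induction k with
  | zero =>
    intro w ν c _ _ _
    simp [colsF]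
  | succ k ih =>
    intro w ν c hw1 hw0 hν
    rw [reorg]
    have hT : ∀ cc : Fin (B+1),
        (∑ μ' : Fin k → Fin (B+1),
          colsF B (fun j => w (j+1)) (fext μ') (fun j => ν (j+1)) k (cc:ℕ))
        = if (cc:ℕ) = 0 then 1 else 0 := by
      intro cc
      exact ih _ _ _ (fun j a b c d h => hw1 (j+1) a b c d h) (fun j => hw0 (j+1))
        (fun j hj => hν (j+1) (Nat.succ_lt_succ hj))
    simp only [hT]
    have hcol : ∀ cc : Fin (B+1),
        (∑ x : Fin (B+1), w 0 c (x:ℕ) (cc:ℕ) (ν 0)) * (if (cc:ℕ) = 0 then (1:F) else 0)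
        = if cc = (0 : Fin (B+1)) then (∑ x : Fin (B+1), w 0 c (x:ℕ) 0 (ν 0)) else 0 := by
      intro cc
      by_cases h0 : cc = 0
      · subst h0; simp
      · rw [if_neg (fun hh => h0 (fin_eq_zero_of_val hh)), if_neg h0, mul_zero]
    rw [Finset.sum_congr rfl fun cc _ => hcol cc,
      Finset.sum_ite_eq' Finset.univ (0 : Fin (B+1)), if_pos (Finset.mem_univ _)]
    have hν0 : ν 0 = 0 := hν 0 (Nat.succ_pos k)
    by_cases hc : c = 0
    · subst hc
      rw [if_pos rfl]
      rw [Fintype.sum_eq_single (0 : Fin (B+1)) (fun x hx => by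
        by_contra hne
        have hcc := (hw1 0 0 (x:ℕ) 0 (ν 0) hne).1
        rw [hν0] at hcc
        exact hx (fin_eq_zero_of_val (by omega)))]
      rw [show ((0 : Fin (B+1)) : ℕ) = 0 from rfl, hν0, hw0 0]
    · rw [if_neg hc]
      refine Finset.sum_eq_zero fun x _ => ?_
      by_contra hne
      have hcc := (hw1 0 c (x:ℕ) 0 (ν 0) hne).1
      rw [hν0] at hcc
      omega

/-- the key row-sum identity: summing over all bottom labels of a row whose
weights are Grothendieck weights with spectral parameter `1` at column `i`,
and whose top labels vanish strictly beyond `i`, gives `1`. -/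
lemma rs (B : ℕ) :
    ∀ (k : ℕ) (u : ℕ → F) (ν : ℕ → ℕ) (i : ℕ),
    i < k → u i = 1 → (∀ j, i < j → ν j = 0) →
    (∑ j ∈ Finset.range k, ν j ≤ B) →
    ∑ μ : Fin k → Fin (B+1), ∑ a : Fin (B+1),
      colsF B (fun j => grothColWeight (u j)) (fext μ) ν k (a:ℕ) = 1 := by
  intro k
  induction k with
  | zero => intro _ _ i hi; omega
  | succ k ih =>
    intro u ν i hik hui hν hsum
    have hν0B : ν 0 ≤ B := by
      have : ν 0 ≤ ∑ j ∈ Finset.range (k+1), ν j :=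
        Finset.single_le_sum (fun j _ => Nat.zero_le _) (Finset.mem_range.mpr (Nat.succ_pos k))
      omega
    rw [Finset.sum_comm]
    have hre : ∀ a : Fin (B+1),
        ∑ μ : Fin (k+1) → Fin (B+1), colsF B (fun j => grothColWeight (u j)) (fext μ) ν (k+1) (a:ℕ)
        = ∑ c : Fin (B+1), (∑ x : Fin (B+1), grothColWeight (u 0) (a:ℕ) (x:ℕ) (c:ℕ) (ν 0)) *
            (∑ μ' : Fin k → Fin (B+1),
              colsF B (fun j => grothColWeight (u (j+1))) (fext μ') (fun j => ν (j+1)) k (c:ℕ)) :=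
      fun a => reorg B k _ ν (a:ℕ)
    simp only [hre]
    rw [Finset.sum_comm]
    -- now goal : ∑ c, ∑ a, S a c * T c = 1
    rcases Nat.eq_zero_or_pos i with hi0 | hipos
    · subst hi0
      have hT : ∀ c : Fin (B+1),
          (∑ μ' : Fin k → Fin (B+1),
            colsF B (fun j => grothColWeight (u (j+1))) (fext μ') (fun j => ν (j+1)) k (c:ℕ))
          = if (c:ℕ) = 0 then 1 else 0 := by
        intro c
        exact zt B k _ _ _ (fun j a b c d h => groth_ne_zero h)
          (fun j => groth_zero_zero _) (fun j _ => hν (j+1) (Nat.succ_pos j))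
      simp only [hT]
      rw [Fintype.sum_eq_single (0 : Fin (B+1)) (fun c hc => by
        rw [if_neg (fun h0 => hc (fin_eq_zero_of_val h0))]
        exact Finset.sum_eq_zero fun a _ => mul_zero _)]
      rw [hui]
      have hsc := single_col B (1:F) 0 (ν 0) (by omega : 0 + ν 0 ≤ B)
      simpa using hsc
    · obtain ⟨i', rfl⟩ : ∃ i', i = i' + 1 := ⟨i - 1, by omega⟩
      have hsum' : ∑ j ∈ Finset.range k, ν (j+1) ≤ B := by
        rw [Finset.sum_range_succ'] at hsum
        omega
      have hstep : ∀ c : Fin (B+1),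
          (∑ a : Fin (B+1),
            (∑ x : Fin (B+1), grothColWeight (u 0) (a:ℕ) (x:ℕ) (c:ℕ) (ν 0)) *
              (∑ μ' : Fin k → Fin (B+1),
                colsF B (fun j => grothColWeight (u (j+1))) (fext μ') (fun j => ν (j+1)) k (c:ℕ)))
          = (∑ μ' : Fin k → Fin (B+1),
                colsF B (fun j => grothColWeight (u (j+1))) (fext μ') (fun j => ν (j+1)) k (c:ℕ)) := by
        intro c
        set T := ∑ μ' : Fin k → Fin (B+1),
            colsF B (fun j => grothColWeight (u (j+1))) (fext μ') (fun j => ν (j+1)) k (c:ℕ) with hTdef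
        by_cases hT0 : T = 0
        · rw [hT0]
          exact Finset.sum_eq_zero fun a _ => mul_zero _
        · -- T ≠ 0 : some colsF term is nonzero, giving the bound c + ν 0 ≤ B
          obtain ⟨μ', _, hμ'⟩ := Finset.exists_ne_zero_of_sum_ne_zero hT0
          have hcons := suppA B k _ _ _ _
            (fun j a b c d h => (groth_ne_zero h).1) hμ'
          have hcB : (c:ℕ) + ν 0 ≤ B := by
            have h1 : (c:ℕ) ≤ ∑ j ∈ Finset.range k, ν (j+1) := by omega
            rw [Finset.sum_range_succ'] at hsum
            omega
          rw [← Finset.sum_mul]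
          rw [single_col B (u 0) (c:ℕ) (ν 0) hcB, one_mul]
      rw [Finset.sum_congr rfl (fun c _ => hstep c), Finset.sum_comm]
      exact ih (fun j => u (j+1)) (fun j => ν (j+1)) i' (by omega) hui
        (fun j hj => hν (j+1) (by omega)) hsum'
end GrothAux
namespace GrothAux
variable {F : Type*} [Field F]

lemma row_eq' (B : ℕ) :
    ∀ (n : ℕ) (w : ℕ → ℕ → ℕ → ℕ → ℕ → F) (μ ν : ℕ → ℕ) (a : Fin (B+1)),
    (∑ e : Fin (n+1) → Fin (B+1),
      if (e (Fin.last n) : ℕ) = 0 ∧ e 0 = a then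
        ∏ j : Fin n, w (j:ℕ) (e j.castSucc : ℕ) (μ (j:ℕ)) (e j.succ : ℕ) (ν (j:ℕ))
      else 0)
    = colsF B w μ ν n (a : ℕ) := by
  intro n
  induction n with
  | zero =>
    intro w μ ν a
    rw [sum_pi_succ 0]
    have h1 : ∀ (x : Fin (B+1)) (e' : Fin 0 → Fin (B+1)),
        (if (((Fin.cons x e' : Fin 1 → Fin (B+1)) (Fin.last 0)) : ℕ) = 0 ∧ (Fin.cons x e' : Fin 1 → Fin (B+1)) 0 = a then
          ∏ j : Fin 0, w (j:ℕ) ((Fin.cons x e' : Fin 1 → Fin (B+1)) j.castSucc : ℕ) (μ (j:ℕ)) ((Fin.cons x e' : Fin 1 → Fin (B+1)) j.succ : ℕ) (ν (j:ℕ))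
        else 0)
        = if x = a then (if (a:ℕ) = 0 then 1 else 0) else 0 := by
      intro x e'
      have hlast : (Fin.last 0) = (0 : Fin 1) := rfl
      rw [hlast, Fin.cons_zero]
      by_cases hx : x = a
      · subst hx
        by_cases h0 : (x:ℕ) = 0
        · rw [if_pos ⟨h0, rfl⟩, if_pos rfl, if_pos h0, Finset.univ_eq_empty, Finset.prod_empty]
        · rw [if_neg (fun hc => h0 hc.1), if_pos rfl, if_neg h0]
      · rw [if_neg (fun hc => hx hc.2), if_neg hx]
    rw [Finset.sum_congr rfl fun x _ => Finset.sum_congr rfl fun e' _ => h1 x e']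
    simp only [Finset.sum_const, Finset.card_univ]
    have hcard : Fintype.card (Fin 0 → Fin (B+1)) = 1 := by simp
    rw [Finset.sum_congr rfl fun x _ => by rw [hcard, one_smul]]
    rw [Finset.sum_ite_eq' Finset.univ a, if_pos (Finset.mem_univ _)]
    rfl
  | succ n ih =>
    intro w μ ν a
    rw [sum_pi_succ (n+1)]
    have hterm : ∀ (x : Fin (B+1)) (e' : Fin (n+1) → Fin (B+1)),
        (if (((Fin.cons x e' : Fin (n+2) → Fin (B+1)) (Fin.last (n+1))) : ℕ) = 0 ∧ (Fin.cons x e' : Fin (n+2) → Fin (B+1)) 0 = a then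
          ∏ j : Fin (n+1), w (j:ℕ) ((Fin.cons x e' : Fin (n+2) → Fin (B+1)) j.castSucc : ℕ) (μ (j:ℕ)) ((Fin.cons x e' : Fin (n+2) → Fin (B+1)) j.succ : ℕ) (ν (j:ℕ))
        else 0)
        = if x = a then
            (if ((e' (Fin.last n)):ℕ) = 0 then
              w 0 (a:ℕ) (μ 0) (e' 0 : ℕ) (ν 0) *
                ∏ j : Fin n, w ((j:ℕ)+1) (e' j.castSucc : ℕ) (μ ((j:ℕ)+1)) (e' j.succ : ℕ) (ν ((j:ℕ)+1))
            else 0)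
          else 0 := by
      intro x e'
      rw [← Fin.succ_last, Fin.cons_succ, Fin.cons_zero]
      have hprod : (∏ j : Fin (n+1), w (j:ℕ) ((Fin.cons x e' : Fin (n+2) → Fin (B+1)) j.castSucc : ℕ) (μ (j:ℕ)) ((Fin.cons x e' : Fin (n+2) → Fin (B+1)) j.succ : ℕ) (ν (j:ℕ)))
          = w 0 (x:ℕ) (μ 0) (e' 0 : ℕ) (ν 0) *
              ∏ j : Fin n, w ((j:ℕ)+1) (e' j.castSucc : ℕ) (μ ((j:ℕ)+1)) (e' j.succ : ℕ) (ν ((j:ℕ)+1)) := by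
        rw [Fin.prod_univ_succ]
        congr 1
        all_goals try rw [Fin.castSucc_zero, Fin.cons_zero, Fin.cons_succ]
        all_goals refine Finset.prod_congr rfl fun j _ => ?_
        all_goals rw [← Fin.succ_castSucc, Fin.cons_succ, Fin.cons_succ, Fin.val_succ]
      by_cases hx : x = a
      · subst hx
        by_cases h0 : ((e' (Fin.last n)):ℕ) = 0
        · rw [if_pos ⟨h0, rfl⟩, if_pos rfl, if_pos h0, hprod]
        · rw [if_neg (fun hc => h0 hc.1), if_pos rfl, if_neg h0]
      · rw [if_neg (fun hc => hx hc.2), if_neg hx]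
    rw [Finset.sum_congr rfl fun x _ => Finset.sum_congr rfl fun e' _ => hterm x e']
    have hpull : ∀ x : Fin (B+1),
        (∑ e' : Fin (n+1) → Fin (B+1),
          if x = a then
            (if ((e' (Fin.last n)):ℕ) = 0 then
              w 0 (a:ℕ) (μ 0) (e' 0 : ℕ) (ν 0) *
                ∏ j : Fin n, w ((j:ℕ)+1) (e' j.castSucc : ℕ) (μ ((j:ℕ)+1)) (e' j.succ : ℕ) (ν ((j:ℕ)+1))
            else 0)
          else 0)
        = if x = a then
            (∑ e' : Fin (n+1) → Fin (B+1),
              if ((e' (Fin.last n)):ℕ) = 0 then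
                w 0 (a:ℕ) (μ 0) (e' 0 : ℕ) (ν 0) *
                  ∏ j : Fin n, w ((j:ℕ)+1) (e' j.castSucc : ℕ) (μ ((j:ℕ)+1)) (e' j.succ : ℕ) (ν ((j:ℕ)+1))
              else 0)
          else 0 := by
      intro x
      by_cases hx : x = a
      · simp only [if_pos hx]
      · simp only [if_neg hx, Finset.sum_const_zero]
    rw [Finset.sum_congr rfl fun x _ => hpull x]
    rw [Finset.sum_ite_eq' Finset.univ a, if_pos (Finset.mem_univ _)]
    -- now : ∑ e', if e' last = 0 then W(e' 0) * P e' else 0 = colsF (n+1) a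
    have hins : ∀ e' : Fin (n+1) → Fin (B+1),
        (if ((e' (Fin.last n)):ℕ) = 0 then
          w 0 (a:ℕ) (μ 0) (e' 0 : ℕ) (ν 0) *
            ∏ j : Fin n, w ((j:ℕ)+1) (e' j.castSucc : ℕ) (μ ((j:ℕ)+1)) (e' j.succ : ℕ) (ν ((j:ℕ)+1))
        else 0)
        = ∑ c : Fin (B+1), (if e' 0 = c then
            w 0 (a:ℕ) (μ 0) (c : ℕ) (ν 0) *
              (if ((e' (Fin.last n)):ℕ) = 0 ∧ e' 0 = c then
                ∏ j : Fin n, w ((j:ℕ)+1) (e' j.castSucc : ℕ) (μ ((j:ℕ)+1)) (e' j.succ : ℕ) (ν ((j:ℕ)+1))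
              else 0)
          else 0) := by
      intro e'
      rw [Finset.sum_ite_eq Finset.univ (e' 0), if_pos (Finset.mem_univ _)]
      by_cases h0 : ((e' (Fin.last n)):ℕ) = 0
      · rw [if_pos h0, if_pos ⟨h0, rfl⟩]
      · rw [if_neg h0, if_neg (fun hc => h0 hc.1), mul_zero]
    rw [Finset.sum_congr rfl fun e' _ => hins e']
    rw [Finset.sum_comm]
    have hcol : ∀ c : Fin (B+1),
        (∑ e' : Fin (n+1) → Fin (B+1), if e' 0 = c then
            w 0 (a:ℕ) (μ 0) (c : ℕ) (ν 0) *
              (if ((e' (Fin.last n)):ℕ) = 0 ∧ e' 0 = c then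
                ∏ j : Fin n, w ((j:ℕ)+1) (e' j.castSucc : ℕ) (μ ((j:ℕ)+1)) (e' j.succ : ℕ) (ν ((j:ℕ)+1))
              else 0)
          else 0)
        = w 0 (a:ℕ) (μ 0) (c : ℕ) (ν 0) *
            colsF B (fun j => w (j+1)) (fun j => μ (j+1)) (fun j => ν (j+1)) n (c:ℕ) := by
      intro c
      rw [← ih (fun j => w (j+1)) (fun j => μ (j+1)) (fun j => ν (j+1)) c, Finset.mul_sum]
      refine Finset.sum_congr rfl fun e' _ => ?_
      by_cases hc : e' 0 = c
      · rw [if_pos hc]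
      · rw [if_neg hc, if_neg (fun hh => hc hh.2), mul_zero]
    rw [Finset.sum_congr rfl fun c _ => hcol c]
    rfl

lemma row_eq (B n : ℕ) (w : ℕ → ℕ → ℕ → ℕ → ℕ → F) (μ ν : ℕ → ℕ) :
    (∑ e : Fin (n+1) → Fin (B+1),
      if (e (Fin.last n) : ℕ) = 0 then
        ∏ j : Fin n, w (j:ℕ) (e j.castSucc : ℕ) (μ (j:ℕ)) (e j.succ : ℕ) (ν (j:ℕ))
      else 0)
    = ∑ a : Fin (B+1), colsF B w μ ν n (a:ℕ) := by
  have hins : ∀ e : Fin (n+1) → Fin (B+1),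
      (if (e (Fin.last n) : ℕ) = 0 then
        ∏ j : Fin n, w (j:ℕ) (e j.castSucc : ℕ) (μ (j:ℕ)) (e j.succ : ℕ) (ν (j:ℕ))
      else 0)
      = ∑ a : Fin (B+1), (if e 0 = a then
          (if (e (Fin.last n) : ℕ) = 0 ∧ e 0 = a then
            ∏ j : Fin n, w (j:ℕ) (e j.castSucc : ℕ) (μ (j:ℕ)) (e j.succ : ℕ) (ν (j:ℕ))
          else 0)
        else 0) := by
    intro e
    rw [Finset.sum_ite_eq Finset.univ (e 0), if_pos (Finset.mem_univ _)]
    by_cases h0 : (e (Fin.last n) : ℕ) = 0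
    · rw [if_pos h0, if_pos ⟨h0, rfl⟩]
    · rw [if_neg h0, if_neg (fun hc => h0 hc.1)]
  rw [Finset.sum_congr rfl fun e _ => hins e, Finset.sum_comm]
  refine Finset.sum_congr rfl fun a _ => ?_
  rw [← row_eq' B n w μ ν a]
  refine Finset.sum_congr rfl fun e _ => ?_
  by_cases hc : e 0 = a
  · rw [if_pos hc]
  · rw [if_neg hc, if_neg (fun hh => hc hh.2)]
end GrothAux
namespace GrothAux
variable {F : Type*} [Field F]

lemma latticeZ_succ (m n B : ℕ) (w : Fin (m+1) → Fin n → ℕ → ℕ → ℕ → ℕ → F)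
    (bot top : ℕ → ℕ) (hbot : ∀ j, j < n → bot j ≤ B) :
    latticeZ (m+1) n B w bot top
    = ∑ ν : Fin n → Fin (B+1),
        (∑ e0 : Fin (n+1) → Fin (B+1),
          if (e0 (Fin.last n) : ℕ) = 0 then
            ∏ j : Fin n, w 0 j (e0 j.castSucc) (bot (j:ℕ)) (e0 j.succ) (ν j)
          else 0) *
        latticeZ m n B (fun i j => w i.succ j) (fun j => (fext ν) j) top := by
  unfold latticeZ
  rw [sum_pi_succ (m+1) (α := Fin n → Fin (B+1))]
  -- split the e-sum inside
  rw [Finset.sum_congr rfl fun v0 (_ : v0 ∈ Finset.univ) =>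
    Finset.sum_congr rfl fun v' (_ : v' ∈ Finset.univ) =>
      sum_pi_succ (α := Fin (n+1) → Fin (B+1)) m _]
  -- notation for the pieces
  set I1 : (Fin n → Fin (B+1)) → F :=
    fun v0 => if ∀ j : Fin n, (v0 j : ℕ) = bot (j:ℕ) then 1 else 0 with hI1
  set R : (Fin (n+1) → Fin (B+1)) → (Fin n → Fin (B+1)) → F :=
    fun e0 ν => if (e0 (Fin.last n) : ℕ) = 0 then
      ∏ j : Fin n, w 0 j (e0 j.castSucc) (bot (j:ℕ)) (e0 j.succ) (ν j) else 0 with hR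
  set Rest : (Fin (m+1) → Fin n → Fin (B+1)) → (Fin m → Fin (n+1) → Fin (B+1)) → F :=
    fun v' e' => if (∀ j : Fin n, (v' (Fin.last m) j : ℕ) = top (j:ℕ))
        ∧ (∀ i : Fin m, (e' i (Fin.last n) : ℕ) = 0) then
      ∏ i : Fin m, ∏ j : Fin n,
        w i.succ j (e' i j.castSucc) (v' i.castSucc j) (e' i j.succ) (v' i.succ j)
      else 0 with hRest
  have hbody : ∀ (v0 : Fin n → Fin (B+1)) (v' : Fin (m+1) → Fin n → Fin (B+1))
      (e0 : Fin (n+1) → Fin (B+1)) (e' : Fin m → Fin (n+1) → Fin (B+1)),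
      (if (∀ j : Fin n, (((Fin.cons v0 v' : Fin (m+2) → Fin n → Fin (B+1)) 0) j : ℕ) = bot (j:ℕ))
          ∧ (∀ j : Fin n, (((Fin.cons v0 v' : Fin (m+2) → Fin n → Fin (B+1)) (Fin.last (m+1))) j : ℕ) = top (j:ℕ))
          ∧ (∀ i : Fin (m+1), (((Fin.cons e0 e' : Fin (m+1) → Fin (n+1) → Fin (B+1)) i) (Fin.last n) : ℕ) = 0) then
        ∏ i : Fin (m+1), ∏ j : Fin n,
          w i j ((Fin.cons e0 e' : Fin (m+1) → Fin (n+1) → Fin (B+1)) i j.castSucc)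
            ((Fin.cons v0 v' : Fin (m+2) → Fin n → Fin (B+1)) i.castSucc j)
            ((Fin.cons e0 e' : Fin (m+1) → Fin (n+1) → Fin (B+1)) i j.succ)
            ((Fin.cons v0 v' : Fin (m+2) → Fin n → Fin (B+1)) i.succ j)
      else 0)
      = I1 v0 * (R e0 (v' 0) * Rest v' e') := by
    intro v0 v' e0 e'
    have hc0 : ∀ j : Fin n, (Fin.cons v0 v' : Fin (m+2) → Fin n → Fin (B+1)) 0 j = v0 j := by
      intro j; rw [Fin.cons_zero]
    have hclast : ∀ j : Fin n,
        (Fin.cons v0 v' : Fin (m+2) → Fin n → Fin (B+1)) (Fin.last (m+1)) j = v' (Fin.last m) j := by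
      intro j; rw [← Fin.succ_last, Fin.cons_succ]
    have hecond : (∀ i : Fin (m+1), (((Fin.cons e0 e' : Fin (m+1) → Fin (n+1) → Fin (B+1)) i) (Fin.last n) : ℕ) = 0)
        ↔ ((e0 (Fin.last n) : ℕ) = 0 ∧ ∀ i : Fin m, (e' i (Fin.last n) : ℕ) = 0) := by
      rw [Fin.forall_fin_succ]
      simp only [Fin.cons_zero, Fin.cons_succ]
    have hprod : (∏ i : Fin (m+1), ∏ j : Fin n,
          w i j ((Fin.cons e0 e' : Fin (m+1) → Fin (n+1) → Fin (B+1)) i j.castSucc)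
            ((Fin.cons v0 v' : Fin (m+2) → Fin n → Fin (B+1)) i.castSucc j)
            ((Fin.cons e0 e' : Fin (m+1) → Fin (n+1) → Fin (B+1)) i j.succ)
            ((Fin.cons v0 v' : Fin (m+2) → Fin n → Fin (B+1)) i.succ j))
        = (∏ j : Fin n, w 0 j (e0 j.castSucc) (v0 j : ℕ) (e0 j.succ) (v' 0 j)) *
            ∏ i : Fin m, ∏ j : Fin n,
              w i.succ j (e' i j.castSucc) (v' i.castSucc j) (e' i j.succ) (v' i.succ j) := by
      rw [Fin.prod_univ_succ]
      congr 1
      all_goals first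
        | (refine Finset.prod_congr rfl fun j _ => ?_
           rw [Fin.castSucc_zero, Fin.cons_zero, Fin.cons_succ, Fin.cons_zero])
        | (refine Finset.prod_congr rfl fun i _ => Finset.prod_congr rfl fun j _ => ?_
           rw [Fin.cons_succ, ← Fin.succ_castSucc, Fin.cons_succ, Fin.cons_succ])
    by_cases h1 : ∀ j : Fin n, (v0 j : ℕ) = bot (j:ℕ)
    · by_cases h2 : ∀ j : Fin n, (v' (Fin.last m) j : ℕ) = top (j:ℕ)
      · by_cases h3 : (e0 (Fin.last n) : ℕ) = 0
        · by_cases h4 : ∀ i : Fin m, (e' i (Fin.last n) : ℕ) = 0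
          · rw [if_pos ⟨fun j => by rw [hc0 j]; exact h1 j,
              fun j => by rw [hclast j]; exact h2 j, hecond.mpr ⟨h3, h4⟩⟩]
            rw [hprod]
            simp only [hI1, hR, hRest]
            rw [if_pos h1, if_pos h3, if_pos ⟨h2, h4⟩, one_mul]
            congr 1
            refine Finset.prod_congr rfl fun j _ => ?_
            rw [h1 j]
          · rw [if_neg (fun hc => h4 (hecond.mp hc.2.2).2)]
            simp only [hI1, hRest]
            rw [if_neg (fun hc : _ ∧ _ => h4 hc.2)]
            simp
        · rw [if_neg (fun hc => h3 (hecond.mp hc.2.2).1)]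
          simp only [hR]
          rw [if_neg h3]
          simp
      · rw [if_neg (fun hc => h2 (fun j => by rw [← hclast j]; exact hc.2.1 j))]
        simp only [hRest]
        rw [if_neg (fun hc : _ ∧ _ => h2 hc.1)]
        simp
    · rw [if_neg (fun hc => h1 (fun j => by rw [← hc0 j]; exact hc.1 j))]
      simp only [hI1]
      rw [if_neg h1]
      simp
  rw [Finset.sum_congr rfl fun v0 (_ : v0 ∈ Finset.univ) =>
    Finset.sum_congr rfl fun v' (_ : v' ∈ Finset.univ) =>
      Finset.sum_congr rfl fun e0 (_ : e0 ∈ Finset.univ) =>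
        Finset.sum_congr rfl fun e' (_ : e' ∈ Finset.univ) => hbody v0 v' e0 e']
  -- pull out the v0 sum
  have hIsum : ∑ v0 : Fin n → Fin (B+1), I1 v0 = 1 := by
    simp only [hI1]
    rw [Fintype.sum_eq_single (fun j : Fin n => (⟨bot (j:ℕ), Nat.lt_succ_of_le (hbot _ j.isLt)⟩ : Fin (B+1)))]
    · rw [if_pos (fun j => rfl)]
    · intro v0 hv0
      rw [if_neg (fun hc => hv0 (funext fun j => Fin.ext (by rw [hc j])))]
  calc ∑ v0 : Fin n → Fin (B+1), ∑ v' : Fin (m+1) → Fin n → Fin (B+1),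
        ∑ e0 : Fin (n+1) → Fin (B+1), ∑ e' : Fin m → Fin (n+1) → Fin (B+1),
          I1 v0 * (R e0 (v' 0) * Rest v' e')
      = ∑ v0 : Fin n → Fin (B+1), I1 v0 * ∑ v' : Fin (m+1) → Fin n → Fin (B+1),
          ∑ e0 : Fin (n+1) → Fin (B+1), ∑ e' : Fin m → Fin (n+1) → Fin (B+1),
            (R e0 (v' 0) * Rest v' e') := by
        refine Finset.sum_congr rfl fun v0 _ => ?_
        rw [Finset.mul_sum]
        refine Finset.sum_congr rfl fun v' _ => ?_
        rw [Finset.mul_sum]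
        refine Finset.sum_congr rfl fun e0 _ => ?_
        rw [Finset.mul_sum]
    _ = ∑ v' : Fin (m+1) → Fin n → Fin (B+1),
          ∑ e0 : Fin (n+1) → Fin (B+1), ∑ e' : Fin m → Fin (n+1) → Fin (B+1),
            (R e0 (v' 0) * Rest v' e') := by
        rw [← Finset.sum_mul, hIsum, one_mul]
    _ = ∑ v' : Fin (m+1) → Fin n → Fin (B+1),
          ∑ e0 : Fin (n+1) → Fin (B+1), ∑ e' : Fin m → Fin (n+1) → Fin (B+1),
            ∑ ν : Fin n → Fin (B+1),
            (if ν = v' 0 then R e0 ν * Rest v' e' else 0) := by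
        refine Finset.sum_congr rfl fun v' _ => Finset.sum_congr rfl fun e0 _ =>
          Finset.sum_congr rfl fun e' _ => ?_
        rw [Finset.sum_ite_eq' Finset.univ (v' 0) (fun ν => R e0 ν * Rest v' e'),
          if_pos (Finset.mem_univ _)]
    _ = ∑ v' : Fin (m+1) → Fin n → Fin (B+1),
          ∑ e0 : Fin (n+1) → Fin (B+1), ∑ ν : Fin n → Fin (B+1),
            ∑ e' : Fin m → Fin (n+1) → Fin (B+1),
            (if ν = v' 0 then R e0 ν * Rest v' e' else 0) := by
        exact Finset.sum_congr rfl fun v' _ => Finset.sum_congr rfl fun e0 _ =>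
          Finset.sum_comm
    _ = ∑ v' : Fin (m+1) → Fin n → Fin (B+1),
          ∑ ν : Fin n → Fin (B+1), ∑ e0 : Fin (n+1) → Fin (B+1),
            ∑ e' : Fin m → Fin (n+1) → Fin (B+1),
            (if ν = v' 0 then R e0 ν * Rest v' e' else 0) := by
        exact Finset.sum_congr rfl fun v' _ => Finset.sum_comm
    _ = ∑ ν : Fin n → Fin (B+1), ∑ v' : Fin (m+1) → Fin n → Fin (B+1),
          ∑ e0 : Fin (n+1) → Fin (B+1),
            ∑ e' : Fin m → Fin (n+1) → Fin (B+1),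
            (if ν = v' 0 then R e0 ν * Rest v' e' else 0) := Finset.sum_comm
    _ = ∑ ν : Fin n → Fin (B+1),
          (∑ e0 : Fin (n+1) → Fin (B+1), R e0 ν) *
            latticeZ m n B (fun i j => w i.succ j) (fun j => (fext ν) j) top := by
        refine Finset.sum_congr rfl fun ν _ => ?_
        conv_rhs => rw [Finset.sum_mul]
        rw [Finset.sum_comm]
        refine Finset.sum_congr rfl fun e0 _ => ?_
        show _ = R e0 ν * (∑ v : Fin (m+1) → Fin n → Fin (B+1),
          ∑ e : Fin m → Fin (n+1) → Fin (B+1), _)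
        rw [Finset.mul_sum]
        refine Finset.sum_congr rfl fun v' _ => ?_
        rw [Finset.mul_sum]
        refine Finset.sum_congr rfl fun e' _ => ?_
        have hνv : (ν = v' 0) ↔ (∀ j : Fin n, (v' 0 j : ℕ) = fext ν (j:ℕ)) := by
          constructor
          · intro h j; subst h; rw [fext_coe]
          · intro h
            funext j
            exact Fin.ext (by rw [h j, fext_coe])
        simp only [hRest]
        by_cases hc : ν = v' 0
        · rw [if_pos hc]
          by_cases hc2 : (∀ j : Fin n, (v' (Fin.last m) j : ℕ) = top (j:ℕ))
              ∧ (∀ i : Fin m, (e' i (Fin.last n) : ℕ) = 0)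
          · rw [if_pos hc2, if_pos ⟨hνv.mp hc, hc2.1, hc2.2⟩]
          · rw [if_neg hc2, if_neg (fun hcc => hc2 ⟨hcc.2.1, hcc.2.2⟩), mul_zero]
        · rw [if_neg hc, if_neg (fun hcc => hc (hνv.mpr hcc.1)), mul_zero]
    _ = _ := by
        refine Finset.sum_congr rfl fun ν _ => ?_
        simp only [hR]
        rfl
end GrothAux
namespace GrothAux
variable {F : Type*} [Field F]

/-- extend Fin-indexed weights to ℕ-indexed ones. -/
def wext {m n : ℕ} (w : Fin m → Fin n → ℕ → ℕ → ℕ → ℕ → F) :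
    ℕ → ℕ → ℕ → ℕ → ℕ → ℕ → F :=
  fun i j => if h : i < m then (if h2 : j < n then w ⟨i, h⟩ ⟨j, h2⟩ else fun _ _ _ _ => 0)
    else fun _ _ _ _ => 0

lemma latticeZ_eq_rowsF (B : ℕ) :
    ∀ (m n : ℕ) (w : Fin m → Fin n → ℕ → ℕ → ℕ → ℕ → F) (bot top : ℕ → ℕ),
    (∀ j, j < n → bot j ≤ B) →
    latticeZ m n B w bot top = rowsF B n top (wext w) m bot := by
  intro m
  induction m with
  | zero =>
    intro n w bot top hbot
    unfold latticeZ rowsF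
    rw [sum_pi_succ 0 (α := Fin n → Fin (B+1))]
    have hone : ∀ (v0 : Fin n → Fin (B+1)) (v' : Fin 0 → Fin n → Fin (B+1)),
        (∑ e : Fin 0 → Fin (n+1) → Fin (B+1),
          if (∀ j : Fin n, (((Fin.cons v0 v' : Fin 1 → Fin n → Fin (B+1)) 0) j : ℕ) = bot (j:ℕ))
              ∧ (∀ j : Fin n, (((Fin.cons v0 v' : Fin 1 → Fin n → Fin (B+1)) (Fin.last 0)) j : ℕ) = top (j:ℕ))
              ∧ (∀ i : Fin 0, ((e i) (Fin.last n) : ℕ) = 0) then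
            ∏ i : Fin 0, ∏ j : Fin n,
              w i j ((e i) j.castSucc) (((Fin.cons v0 v' : Fin 1 → Fin n → Fin (B+1)) i.castSucc) j)
                ((e i) j.succ) (((Fin.cons v0 v' : Fin 1 → Fin n → Fin (B+1)) i.succ) j)
          else 0)
        = if (∀ j : Fin n, (v0 j : ℕ) = bot (j:ℕ)) ∧ (∀ j : Fin n, (v0 j : ℕ) = top (j:ℕ))
            then 1 else 0 := by
      intro v0 v'
      have h1 : ∀ j : Fin n, (Fin.cons v0 v' : Fin 1 → Fin n → Fin (B+1)) 0 j = v0 j :=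
        fun j => by rw [Fin.cons_zero]
      have h2 : ∀ j : Fin n, (Fin.cons v0 v' : Fin 1 → Fin n → Fin (B+1)) (Fin.last 0) j = v0 j :=
        fun j => by rw [show Fin.last 0 = 0 from rfl, Fin.cons_zero]
      rw [Fintype.sum_eq_single (default : Fin 0 → Fin (n+1) → Fin (B+1))
        (fun e he => absurd (Subsingleton.elim e default) he)]
      by_cases hc : (∀ j : Fin n, (v0 j : ℕ) = bot (j:ℕ)) ∧ (∀ j : Fin n, (v0 j : ℕ) = top (j:ℕ))
      · rw [if_pos hc, if_pos ⟨fun j => by rw [h1 j]; exact hc.1 j,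
          fun j => by rw [h2 j]; exact hc.2 j, fun i => i.elim0⟩]
        simp
      · rw [if_neg hc, if_neg (fun hcc => hc ⟨fun j => by rw [← h1 j]; exact hcc.1 j,
          fun j => by rw [← h2 j]; exact hcc.2.1 j⟩)]
    rw [Finset.sum_congr rfl fun v0 (_ : v0 ∈ Finset.univ) =>
      Finset.sum_congr rfl fun v' (_ : v' ∈ Finset.univ) => hone v0 v']
    rw [Finset.sum_congr rfl fun v0 (_ : v0 ∈ Finset.univ) =>
      (Finset.sum_const _ : ∑ _v' : Fin 0 → Fin n → Fin (B+1), _ = _)]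
    have hcard : Fintype.card (Fin 0 → Fin n → Fin (B+1)) = 1 := by simp
    rw [Finset.sum_congr rfl fun v0 (_ : v0 ∈ Finset.univ) => by
      rw [Finset.card_univ, hcard, one_smul]]
    by_cases hbt : ∀ j < n, bot j = top j
    · rw [if_pos hbt]
      rw [Fintype.sum_eq_single (fun j : Fin n =>
        (⟨bot (j:ℕ), Nat.lt_succ_of_le (hbot _ j.isLt)⟩ : Fin (B+1)))]
      · rw [if_pos ⟨fun j => rfl, fun j => (hbt (j:ℕ) j.isLt) ▸ rfl⟩]
      · intro v0 hv0
        rw [if_neg (fun hc => hv0 (funext fun j => Fin.ext (by rw [hc.1 j])))]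
    · rw [if_neg hbt]
      refine Finset.sum_eq_zero fun v0 _ => ?_
      rw [if_neg (fun hc => hbt (fun j hj => by
        rw [← hc.1 ⟨j, hj⟩, hc.2 ⟨j, hj⟩]))]
  | succ m ih =>
    intro n w bot top hbot
    rw [latticeZ_succ m n B w bot top (fun j hj => hbot j hj)]
    have hfextB : ∀ (ν : Fin n → Fin (B+1)) j, j < n → fext ν j ≤ B := by
      intro ν j hj
      unfold fext
      rw [dif_pos hj]
      exact Nat.lt_succ_iff.mp (ν ⟨j, hj⟩).isLt
    show _ = rowsF B n top (wext w) (m+1) bot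
    rw [show rowsF B n top (wext w) (m+1) bot
        = ∑ ν : Fin n → Fin (B+1),
          (∑ a : Fin (B+1), colsF B ((wext w) 0) bot (fext ν) n (a : ℕ)) *
            rowsF B n top (fun i => (wext w) (i+1)) m (fext ν) from rfl]
    refine Finset.sum_congr rfl fun ν _ => ?_
    congr 1
    · -- the row factor
      rw [← row_eq B n ((wext w) 0) bot (fext ν)]
      refine Finset.sum_congr rfl fun e0 _ => ?_
      by_cases h0 : (e0 (Fin.last n) : ℕ) = 0
      · rw [if_pos h0, if_pos h0]
        refine Finset.prod_congr rfl fun j _ => ?_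
        have hw0 : (wext w) 0 (j:ℕ) = w 0 j := by
          unfold wext
          rw [dif_pos (Nat.succ_pos m), dif_pos j.isLt]
          first
          | rfl
          | simp only [Fin.eta, Fin.mk_zero]
        rw [hw0, fext_coe]
      · rw [if_neg h0, if_neg h0]
    · rw [ih n (fun i j => w i.succ j) (fun j => fext ν j) top (hfextB ν)]
      refine rowsF_congr B n top m _ _ _ _ ?_ (fun _ _ => rfl)
      intro i hi j hj
      unfold wext
      rw [dif_pos (Nat.succ_lt_succ hi), dif_pos hj, dif_pos hi, dif_pos hj]
      rfl
end GrothAux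
namespace GrothAux
variable {F : Type*} [Field F]

lemma mcol_le (lam : ℕ → ℕ) (m j : ℕ) : mcol lam m j ≤ lam 0 := by
  unfold mcol
  exact le_trans (Finset.card_filter_le _ _) (le_of_eq (Finset.card_range _))

lemma mcol_sum (lam : ℕ → ℕ) (m : ℕ) (hrows : ∀ i, m ≤ i → lam i = 0) :
    ∑ j ∈ Finset.range m, mcol lam m j = lam 0 := by
  rcases Nat.eq_zero_or_pos m with hm | hm
  · subst hm
    simp [hrows 0 (le_refl 0)]
  unfold mcol
  have key : (Finset.range (lam 0)).card
      = ∑ b ∈ (Finset.range m).image (· + 1),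
          ((Finset.range (lam 0)).filter (fun c => colHt lam m c = b)).card := by
    apply Finset.card_eq_sum_card_fiberwise
    intro c hc
    rw [Finset.mem_coe, Finset.mem_range] at hc
    have h1 : 1 ≤ colHt lam m c := by
      have hmem : (0 : ℕ) ∈ (Finset.range m).filter (fun r => c < lam r) :=
        Finset.mem_filter.mpr ⟨Finset.mem_range.mpr hm, hc⟩
      have hpos := Finset.card_pos.mpr ⟨0, hmem⟩
      unfold colHt
      omega
    have h2 : colHt lam m c ≤ m :=
      le_trans (Finset.card_filter_le _ _) (le_of_eq (Finset.card_range _))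
    exact Finset.mem_image.mpr ⟨colHt lam m c - 1, Finset.mem_range.mpr (by omega), by omega⟩
  rw [Finset.sum_image (fun a _ b _ h => by omega), Finset.card_range] at key
  exact key.symm

/-- the main invariant, proved by downward induction on the rows. -/
lemma invariant (B m : ℕ) (U : ℕ → ℕ → F) (hU : ∀ i, i < m → U i i = 1)
    (topf : ℕ → ℕ) (htopB : ∀ j, j < m → topf j ≤ B)
    (hsB : ∑ j ∈ Finset.range m, topf j ≤ B) :
    ∀ r, r ≤ m →
      (∀ bot : ℕ → ℕ,
        rowsF B m topf (fun i j => grothColWeight (U (m - r + i) j)) r bot ≠ 0 →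
          (∀ j, m - r ≤ j → j < m → bot j = 0)
          ∧ ∑ j ∈ Finset.range m, bot j ≤ ∑ j ∈ Finset.range m, topf j)
      ∧ (∑ μ : Fin m → Fin (B+1),
          rowsF B m topf (fun i j => grothColWeight (U (m - r + i) j)) r (fext μ) = 1) := by
  intro r
  induction r with
  | zero =>
    intro _
    constructor
    · intro bot hne
      have hcond : ∀ j < m, bot j = topf j := by
        by_contra hc
        exact hne (by simp only [rowsF]; rw [if_neg hc])
      exact ⟨fun j hj1 hj2 => absurd hj2 (by omega),
        le_of_eq (Finset.sum_congr rfl fun j hj => hcond j (Finset.mem_range.mp hj))⟩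
    · rw [Fintype.sum_eq_single (fun j : Fin m =>
        (⟨topf (j:ℕ), Nat.lt_succ_of_le (htopB _ j.isLt)⟩ : Fin (B+1)))]
      · simp only [rowsF]
        rw [if_pos (fun j hj => by simp [fext, hj])]
      · intro μ hμ
        simp only [rowsF]
        rw [if_neg (fun hc => hμ (funext fun j => Fin.ext (by
          rw [← fext_coe μ j]
          exact hc (j:ℕ) j.isLt)))]
  | succ r ihr =>
    intro hrm
    have hrm' : r ≤ m := by omega
    obtain ⟨ha, hb⟩ := ihr hrm'
    have hi0m : m - (r+1) < m := by omega
    have hidx : ∀ i : ℕ, m - (r+1) + (i+1) = m - r + i := by intro i; omega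
    have hunf : ∀ bot : ℕ → ℕ,
        rowsF B m topf (fun i j => grothColWeight (U (m - (r+1) + i) j)) (r+1) bot
        = ∑ ν : Fin m → Fin (B+1),
            (∑ a : Fin (B+1),
              colsF B (fun j => grothColWeight (U (m - (r+1)) j)) bot (fext ν) m (a:ℕ)) *
              rowsF B m topf (fun i j => grothColWeight (U (m - r + i) j)) r (fext ν) := by
      intro bot
      simp only [rowsF]
      refine Finset.sum_congr rfl fun ν _ => ?_
      congr 1
      congr 1
      funext i j
      rw [hidx i]
    constructor
    · intro bot hne
      rw [hunf bot] at hne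
      obtain ⟨ν, _, hν⟩ := Finset.exists_ne_zero_of_sum_ne_zero hne
      have hfac1 : (∑ a : Fin (B+1),
          colsF B (fun j => grothColWeight (U (m - (r+1)) j)) bot (fext ν) m (a:ℕ)) ≠ 0 :=
        fun h0 => hν (by rw [h0, zero_mul])
      have hfac2 : rowsF B m topf (fun i j => grothColWeight (U (m - r + i) j)) r (fext ν) ≠ 0 :=
        fun h0 => hν (by rw [h0, mul_zero])
      obtain ⟨hsupp, hsum⟩ := ha (fext ν) hfac2
      obtain ⟨a, _, hcols⟩ := Finset.exists_ne_zero_of_sum_ne_zero hfac1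
      have hν0 : ∀ j, m - (r+1) < j → fext ν j = 0 := by
        intro j hj
        by_cases hjm : j < m
        · exact hsupp j (by omega) hjm
        · unfold fext
          rw [dif_neg hjm]
      have hconsv := suppA B m _ bot (fext ν) (a:ℕ)
        (fun j a b c d h => (groth_ne_zero h).1) hcols
      constructor
      · exact suppB B m (m - (r+1)) _ bot (fext ν) (a:ℕ)
          (fun j a b c d h => groth_ne_zero h)
          (fun a b c d h => by
            rw [hU (m - (r+1)) hi0m] at h
            exact groth_one_ne_zero h)
          hν0 hcols
      · omega
    · rw [Finset.sum_congr rfl fun μ (_ : μ ∈ Finset.univ) => hunf (fext μ),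
        Finset.sum_comm]
      have hterm : ∀ ν : Fin m → Fin (B+1),
          (∑ μ : Fin m → Fin (B+1),
            (∑ a : Fin (B+1),
              colsF B (fun j => grothColWeight (U (m - (r+1)) j)) (fext μ) (fext ν) m (a:ℕ)) *
              rowsF B m topf (fun i j => grothColWeight (U (m - r + i) j)) r (fext ν))
          = rowsF B m topf (fun i j => grothColWeight (U (m - r + i) j)) r (fext ν) := by
        intro ν
        rw [← Finset.sum_mul]
        by_cases h0 : rowsF B m topf (fun i j => grothColWeight (U (m - r + i) j)) r (fext ν) = 0
        · rw [h0, mul_zero]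
        · obtain ⟨hsupp, hsum⟩ := ha (fext ν) h0
          have hν0 : ∀ j, m - (r+1) < j → fext ν j = 0 := by
            intro j hj
            by_cases hjm : j < m
            · exact hsupp j (by omega) hjm
            · unfold fext
              rw [dif_neg hjm]
          have hrs : (∑ μ : Fin m → Fin (B+1), ∑ a : Fin (B+1),
              colsF B (fun j => grothColWeight (U (m - (r+1)) j)) (fext μ) (fext ν) m (a:ℕ)) = 1 :=
            rs B m (fun j => U (m - (r+1)) j) (fext ν) (m - (r+1)) hi0m (hU _ hi0m)
              hν0 (le_trans hsum hsB)
          rw [hrs, one_mul]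
      rw [Finset.sum_congr rfl fun ν (_ : ν ∈ Finset.univ) => hterm ν]
      exact hb
end GrothAux

/-- The generalised Grothendieck polynomial with the variables specialised to the
inhomogeneities equals one: `G_λ(z₁,…,z_m; z₁,…,z_m) = 1` for every partition `λ` whose
columns all have height at most `m` (i.e. `λ` has at most `m` rows).  Here
`G_λ(x₁,…,x_m; z₁,…,z_m)` is the partition function of the column model for `G^{(0,-1)}`
with the vertex weight at row `i`, site `j` given by `w_{x_i/z_j}(a,b;c,d)`; partitions
are encoded by column multiplicities, with bottom boundary `∅` and top boundary `λ`. -/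
theorem generalised_groth_at_inhomogeneities {F : Type*} [Field F]
    (m : ℕ) (z : Fin m → F) (hz : ∀ i, z i ≠ 0)
    (lam : ℕ → ℕ) (hlam : ∀ i, lam (i + 1) ≤ lam i) (hrows : ∀ i, m ≤ i → lam i = 0)
    (B : ℕ) (hB : lam 0 ≤ B) :
    latticeZ m m B (fun i j a b c d => grothColWeight (z i / z j) a b c d)
        (fun _ => 0) (fun j => mcol lam m j) = 1 := by
  classical
  open GrothAux in
  set topf : ℕ → ℕ := fun j => mcol lam m j with htopf
  have h1 := GrothAux.latticeZ_eq_rowsF B m m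
    (fun i j a b c d => grothColWeight (z i / z j) a b c d) (fun _ => 0) topf
    (fun j _ => Nat.zero_le B)
  set U : ℕ → ℕ → F := fun i j =>
    if hi : i < m then (if hj : j < m then z ⟨i, hi⟩ / z ⟨j, hj⟩ else 1) else 1 with hUdef
  have hU1 : ∀ i, i < m → U i i = 1 := by
    intro i hi
    simp only [hUdef]
    rw [dif_pos hi, dif_pos hi]
    exact div_self (hz _)
  have hsum : ∑ j ∈ Finset.range m, topf j = lam 0 := GrothAux.mcol_sum lam m hrows
  have htopB : ∀ j, j < m → topf j ≤ B := fun j _ => le_trans (GrothAux.mcol_le lam m j) hB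
  have hsB : ∑ j ∈ Finset.range m, topf j ≤ B := by rw [hsum]; exact hB
  -- convert the extended weights to groth(U) weights
  have hWU : GrothAux.rowsF B m topf
        (GrothAux.wext (fun i j a b c d => grothColWeight (z i / z j) a b c d)) m
        (fun _ => (0:ℕ))
      = GrothAux.rowsF B m topf (fun i j => grothColWeight (U i j)) m
        (GrothAux.fext (fun _ : Fin m => (0 : Fin (B+1)))) := by
    refine GrothAux.rowsF_congr B m topf m _ _ _ _ ?_ ?_
    · intro i hi j hj
      unfold GrothAux.wext
      rw [dif_pos hi, dif_pos hj]
      simp only [hUdef]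
      rw [dif_pos hi, dif_pos hj]
    · intro j hj
      unfold GrothAux.fext
      rw [dif_pos hj]
      rfl
  obtain ⟨hA, hB1⟩ := GrothAux.invariant B m U hU1 topf htopB hsB m (le_refl m)
  have hrw : (fun i j => grothColWeight (U (m - m + i) j) : ℕ → ℕ → ℕ → ℕ → ℕ → ℕ → F)
      = fun i j => grothColWeight (U i j) := by
    funext i j
    rw [show m - m + i = i by omega]
  rw [hrw] at hA hB1
  have hzero : ∀ μ : Fin m → Fin (B+1), μ ≠ (fun _ => 0) →
      GrothAux.rowsF B m topf (fun i j => grothColWeight (U i j)) m (GrothAux.fext μ) = 0 := by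
    intro μ hμ
    by_contra hne
    obtain ⟨hsupp, _⟩ := hA (GrothAux.fext μ) hne
    refine hμ (funext fun j => Fin.ext ?_)
    have := hsupp (j:ℕ) (by omega) j.isLt
    rw [GrothAux.fext_coe] at this
    simpa using this
  have hone : GrothAux.rowsF B m topf (fun i j => grothColWeight (U i j)) m
      (GrothAux.fext (fun _ : Fin m => (0 : Fin (B+1)))) = 1 := by
    rw [← hB1, Fintype.sum_eq_single (fun _ : Fin m => (0 : Fin (B+1))) hzero]
  rw [h1, hWU, hone]
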